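/- Let R be a unital associative algebra over a field F, let q ∈ F, q ≠ 1, and let A, B ∈ R satisfy A·B − q·B·A = 1. Then for every positive integer l, A^l·B^l = (q−1)^{−l} · ∑_{i=0}^{l} (−1)^{l−i} q^{C(i+1,2)} C(l,i)_q (A·B − B·A)^i, where C(l,i)_q is the Gaussian binomial coefficient and C(i+1,2) = i(i+1)/2. -/

import Mathlib

/-!
With `c = A B - B A`, the relation gives `A c = q c A`, hence `A p(c) = p(q c) A` for every
polynomial `p`, and `(q - 1) A B = q c - 1`. Moving the outer `A` of `A^l B^l` past the inner
`A^(l-1) B^(l-1) = p(c)` therefore shows `(q - 1)^l A^l B^l = ∏_{j < l} (q^(j+1) c - 1)`, and the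
Cauchy q-binomial theorem expands this product with coefficients `(-1)^(l-i) q^(i(i+1)/2) [l, i]_q`.
-/

def qbinom {F : Type*} [Field F] (q : F) : ℕ → ℕ → F
  | _, 0 => 1
  | 0, _ + 1 => 0
  | n + 1, k + 1 => qbinom q n k + q ^ (k + 1) * qbinom q n (k + 1)

open Polynomial

section QBinomial

variable {F : Type*} [Field F] (q : F)

lemma qbinom_zero_right (n : ℕ) : qbinom q n 0 = 1 := by
  cases n <;> rfl

lemma qbinom_succ_succ (n k : ℕ) :
    qbinom q (n + 1) (k + 1) = qbinom q n k + q ^ (k + 1) * qbinom q n (k + 1) := rfl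

lemma qbinom_eq_zero_of_lt {n k : ℕ} (h : n < k) : qbinom q n k = 0 := by
  induction n generalizing k with
  | zero => obtain ⟨k, rfl⟩ := Nat.exists_eq_add_one_of_ne_zero (by omega : k ≠ 0); rfl
  | succ n ih =>
    obtain ⟨k, rfl⟩ := Nat.exists_eq_add_one_of_ne_zero (by omega : k ≠ 0)
    rw [qbinom_succ_succ, ih (by omega), ih (by omega), mul_zero, add_zero]

noncomputable def qProd (l : ℕ) : F[X] :=
  ∏ j ∈ Finset.range l, (C (q ^ (j + 1)) * X - 1)

lemma qProd_succ (l : ℕ) :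
    qProd q (l + 1) = (C q * X - 1) * (qProd q l).comp (C q * X) := by
  simp only [qProd, Finset.prod_range_succ', prod_comp, sub_comp, mul_comp, C_comp, X_comp,
    one_comp, zero_add, pow_one, mul_comm]
  congr 1
  refine Finset.prod_congr rfl fun j _ => ?_
  rw [pow_succ, C_mul]
  ring

lemma coeff_C_mul_X_sub_one_mul_succ (p : F[X]) (i : ℕ) :
    ((C q * X - 1) * p).coeff (i + 1) = q * p.coeff i - p.coeff (i + 1) := by
  rw [sub_mul, one_mul, mul_assoc, coeff_sub, coeff_C_mul, coeff_X_mul]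

-- Under truncated subtraction `(-1)^(l-i) = -(-1)^(l-(i+1))` fails for `l ≤ i`,
-- where the q-binomial vanishes instead.
lemma neg_one_pow_sub_mul_qbinom (l i : ℕ) :
    (-1 : F) ^ (l - i) * qbinom q l (i + 1) = -((-1) ^ (l - (i + 1)) * qbinom q l (i + 1)) := by
  rcases lt_or_ge i l with hi | hi
  · rw [show l - i = l - (i + 1) + 1 by omega, pow_succ]
    ring
  · rw [qbinom_eq_zero_of_lt q (by omega), mul_zero, mul_zero, neg_zero]

theorem coeff_qProd (l i : ℕ) :
    (qProd q l).coeff i = (-1) ^ (l - i) * q ^ (i + 1).choose 2 * qbinom q l i := by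
  induction l generalizing i with
  | zero =>
    cases i with
    | zero => simp [qProd, qbinom_zero_right]
    | succ i => simp [qProd, coeff_one, qbinom]
  | succ l ih =>
    cases i with
    | zero => simp [qProd_succ, ih, qbinom_zero_right, pow_succ]
    | succ i =>
      rw [qProd_succ, coeff_C_mul_X_sub_one_mul_succ, comp_C_mul_X_coeff, comp_C_mul_X_coeff,
        ih, ih, qbinom_succ_succ, Nat.add_sub_add_right, Nat.choose_succ_succ' (i + 1) 1,
        Nat.choose_one_right]
      linear_combination
        -(q ^ (2 * i + 2) * q ^ (i + 1).choose 2) * neg_one_pow_sub_mul_qbinom q l i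

lemma natDegree_qProd_le (l : ℕ) : (qProd q l).natDegree ≤ l :=
  natDegree_le_iff_coeff_eq_zero.mpr fun i hi => by
    rw [coeff_qProd, qbinom_eq_zero_of_lt q hi, mul_zero]

end QBinomial

section QCommutation

variable {F R : Type*} [Field F] [Ring R] [Algebra F R] {q : F} {A B : R}

lemma mul_pow_of_mul_eq_smul {c : R} (hAc : A * c = q • (c * A)) (n : ℕ) :
    A * c ^ n = q ^ n • (c ^ n * A) := by
  induction n with
  | zero => simp
  | succ n ih =>
    rw [pow_succ, ← mul_assoc, ih, smul_mul_assoc, mul_assoc, hAc, mul_smul_comm, smul_smul,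
      ← mul_assoc, ← pow_succ, ← pow_succ]

lemma mul_aeval_of_mul_eq_smul {c : R} (hAc : A * c = q • (c * A)) (p : F[X]) :
    A * aeval c p = aeval c (p.comp (C q * X)) * A := by
  induction p using Polynomial.induction_on' with
  | add p r hp hr => simp only [map_add, add_comp, mul_add, add_mul, hp, hr]
  | monomial n a =>
    simp only [aeval_monomial, monomial_comp, map_mul, map_pow, aeval_C, aeval_X, mul_pow,
      ← Algebra.smul_def, mul_smul_comm, mul_pow_of_mul_eq_smul hAc, smul_mul_assoc]
    rw [← map_pow, ← Algebra.smul_def, smul_mul_assoc]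

lemma mul_commutator_eq_smul (h : A * B - q • (B * A) = 1) :
    A * (A * B - B * A) = q • ((A * B - B * A) * A) := by
  rw [← sub_eq_zero]
  calc A * (A * B - B * A) - q • ((A * B - B * A) * A)
      = A * (A * B - q • (B * A) - 1) - (A * B - q • (B * A) - 1) * A := by
        simp only [mul_sub, sub_mul, mul_smul_comm, smul_mul_assoc, mul_assoc, mul_one, one_mul]
        module
    _ = 0 := by rw [h, sub_self, mul_zero, zero_mul, sub_zero]

lemma sub_one_smul_mul_eq (h : A * B - q • (B * A) = 1) :
    (q - 1) • (A * B) = q • (A * B - B * A) - 1 := by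
  rw [← h]; module

theorem sub_one_pow_smul_pow_mul_pow (h : A * B - q • (B * A) = 1) (l : ℕ) :
    (q - 1) ^ l • (A ^ l * B ^ l) = aeval (A * B - B * A) (qProd q l) := by
  induction l with
  | zero => simp [qProd]
  | succ l ih =>
    calc (q - 1) ^ (l + 1) • (A ^ (l + 1) * B ^ (l + 1))
        = A * ((q - 1) ^ l • (A ^ l * B ^ l)) * ((q - 1) • B) := by
          rw [pow_succ' A, pow_succ B, pow_succ' (q - 1)]
          simp only [mul_smul_comm, smul_mul_assoc, smul_smul, mul_assoc]
      _ = aeval (A * B - B * A) ((qProd q l).comp (C q * X)) * ((q - 1) • (A * B)) := by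
          rw [ih, mul_aeval_of_mul_eq_smul (mul_commutator_eq_smul h), mul_assoc, mul_smul_comm]
      _ = aeval (A * B - B * A) (qProd q (l + 1)) := by
          rw [sub_one_smul_mul_eq h, qProd_succ, mul_comm (C q * X - 1), map_mul]
          simp [Algebra.smul_def]

end QCommutation

theorem AlBl_expansion {F : Type*} [Field F] {R : Type*} [Ring R] [Algebra F R]
    (q : F) (hq1 : q ≠ 1) (A B : R) (h : A * B - q • (B * A) = 1) :
    ∀ l : ℕ, 0 < l →
      A ^ l * B ^ l = ∑ i ∈ Finset.range (l + 1),
        (((q - 1)⁻¹) ^ l * (-1 : F) ^ (l - i) * q ^ Nat.choose (i + 1) 2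
            * qbinom q l i) • (A * B - B * A) ^ i := by
  intro l _
  have hq : (q - 1) ^ l ≠ 0 := pow_ne_zero l (sub_ne_zero.mpr hq1)
  rw [← inv_smul_smul₀ hq (A ^ l * B ^ l), sub_one_pow_smul_pow_mul_pow h,
    aeval_eq_sum_range' (Nat.lt_succ_of_le (natDegree_qProd_le q l)), Finset.smul_sum]
  simp only [coeff_qProd, smul_smul, inv_pow, mul_assoc]
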